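/- arXiv:1710.02112 — 4 statements merged into one kernel-verified Lean document; each statement's English description precedes it below -/
import Mathlib

section
/- First moment of the sieve weight: there exists an absolute constant C > 0 such that for every 0 < ε < 1/2 the following holds for parameters 1/ε < w < H_1 < H_2 < H_3 < H_4 with w sufficiently large depending on ε and each of H_1, H_2, H_3, H_4 sufficiently large depending on ε and the preceding parameters, with W := ∏_{p ≤ w} p: |E^log_{H_3 < n ≤ H_4, gcd(n,W)=1} g(n) − 1| ≤ C·ε², where g(n) := E^log_{H_1 < p ≤ H_2} p·1_{p ∣ n} (logarithmic average over primes p). -/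
/-!
Exchanging the two logarithmic averages, it suffices that for each prime `p ∈ (H₁, H₂]` the
weighted density `p · Σ_{n ∈ A, p ∣ n} 1/n` of the multiples of `p` in
`A = {H₃ < n ≤ H₄ : (n, W) = 1}` equals `Σ_{n ∈ A} 1/n` up to `O(p)`. Since `p ∤ W`, the
substitution `n = p m` maps these multiples onto `{H₃/p < m ≤ H₄/p : (m, W) = 1}`, which differs
from `A` only by the ranges `(H₃/p, H₃]` and `(H₄/p, H₄]`, each of harmonic weight at most `p`.
The harmonic weight of `A` tends to infinity with `H₄` (it contains the class `1 mod W`), so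
taking `H₄` large makes the relative error `H₂ / Σ_{n ∈ A} 1/n` at most `ε²`.
-/

noncomputable def logAvg (A : Finset ℕ) (f : ℕ → ℝ) : ℝ :=
  (∑ n ∈ A, f n / n) / (∑ n ∈ A, (1 : ℝ) / n)

noncomputable def primesIoc (Hm Hp : ℕ) : Finset ℕ :=
  (Finset.Ioc Hm Hp).filter Nat.Prime

noncomputable def primorialW (w : ℕ) : ℕ :=
  ∏ p ∈ (Finset.range (w + 1)).filter Nat.Prime, p

noncomputable def sieveWeight (H1 H2 n : ℕ) : ℝ :=
  logAvg (primesIoc H1 H2) fun p => (p : ℝ) * (if p ∣ n then 1 else 0)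

open Finset Filter

theorem logAvg_eq_centerMass (A : Finset ℕ) (f : ℕ → ℝ) :
    logAvg A f = A.centerMass (fun n => (1 : ℝ) / n) f := by
  simp only [logAvg, centerMass, smul_eq_mul, div_eq_inv_mul, mul_one]

theorem abs_logAvg_sub_le {A : Finset ℕ} {f : ℕ → ℝ} {c δ : ℝ}
    (hA : 0 < ∑ n ∈ A, (1 : ℝ) / n) (hf : ∀ n ∈ A, |f n - c| ≤ δ) :
    |logAvg A f - c| ≤ δ := by
  have hmem := (convex_closedBall c δ).centerMass_mem (fun n _ => by positivity) hA
    (fun n hn => Metric.mem_closedBall.2 ((Real.dist_eq _ _).trans_le (hf n hn)))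
  rwa [← logAvg_eq_centerMass, Metric.mem_closedBall, Real.dist_eq] at hmem

theorem logAvg_comm (A P : Finset ℕ) (F : ℕ → ℕ → ℝ) :
    logAvg A (fun n => logAvg P (F n)) = logAvg P (fun p => logAvg A (fun n => F n p)) := by
  simp only [logAvg, sum_div, div_div]
  rw [sum_comm]
  refine sum_congr rfl fun p _ => sum_congr rfl fun n _ => ?_
  ring

theorem logAvg_natCast_mul_ite_dvd (A : Finset ℕ) (p : ℕ) :
    logAvg A (fun n => (p : ℝ) * if p ∣ n then 1 else 0)
      = p * (∑ n ∈ A with p ∣ n, (1 : ℝ) / n) / ∑ n ∈ A, (1 : ℝ) / n := by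
  rw [logAvg, sum_filter, mul_sum]
  congr 1
  refine sum_congr rfl fun n _ => ?_
  split_ifs <;> ring

theorem sum_Ioc_div_one_div_le (x : ℕ) {p : ℕ} (hp : 0 < p) :
    ∑ n ∈ Ioc (x / p) x, (1 : ℝ) / n ≤ p := by
  have hterm : ∀ n ∈ Ioc (x / p) x, (1 : ℝ) / n ≤ 1 / (x / p + 1 : ℕ) := fun n hn => by
    gcongr
    exact (mem_Ioc.1 hn).1
  have hx : (x : ℝ) ≤ p * (x / p + 1 : ℕ) := by exact_mod_cast (Nat.lt_mul_div_succ x hp).le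
  calc ∑ n ∈ Ioc (x / p) x, (1 : ℝ) / n
      ≤ #(Ioc (x / p) x) • ((1 : ℝ) / (x / p + 1 : ℕ)) := sum_le_card_nsmul _ _ _ hterm
    _ ≤ x * (1 / (x / p + 1 : ℕ)) := by
        rw [nsmul_eq_mul, Nat.card_Ioc]
        gcongr
        exact_mod_cast Nat.sub_le x (x / p)
    _ ≤ p := by
        rw [mul_one_div, div_le_iff₀ (by positivity)]
        exact hx

def coprimeIoc (W a b : ℕ) : Finset ℕ := (Ioc a b).filter fun n => Nat.gcd n W = 1

section CoprimeIoc

variable {W : ℕ}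

theorem sum_coprimeIoc_one_div_eq_sub {a b : ℕ} (hab : a ≤ b) :
    ∑ n ∈ coprimeIoc W a b, (1 : ℝ) / n
      = ∑ n ∈ range (b + 1), (if n.gcd W = 1 then (1 : ℝ) / n else 0)
        - ∑ n ∈ range (a + 1), (if n.gcd W = 1 then (1 : ℝ) / n else 0) := by
  rw [coprimeIoc, sum_filter, ← Ico_add_one_add_one_eq_Ioc, sum_Ico_eq_sub _ (by omega)]

theorem tendsto_sum_coprimeIoc_one_div (hW : W ≠ 0) (a : ℕ) :
    Tendsto (fun b => ∑ n ∈ coprimeIoc W a b, (1 : ℝ) / n) atTop atTop := by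
  set f : ℕ → ℝ := fun n => if n.gcd W = 1 then (1 : ℝ) / n else 0
  have hf : ∀ n, 0 ≤ f n := fun n => by positivity
  have hdiv : ¬Summable f := fun hsum => Real.not_summable_indicator_one_div_natCast hW 1 <|
    hsum.of_nonneg_of_le (fun n => Set.indicator_nonneg (fun n _ => by positivity) n) fun n => by
      by_cases hn : (n : ZMod W) = 1
      · have hcop : n.gcd W = 1 := (ZMod.isUnit_iff_coprime n W).1 (hn ▸ isUnit_one)
        simp [f, hn, hcop]
      · simp [hn, hf n]
  have hpartial := ((not_summable_iff_tendsto_nat_atTop_of_nonneg hf).1 hdiv).comp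
    (tendsto_add_atTop_nat 1)
  refine (tendsto_atTop_add_const_right _ (-∑ n ∈ range (a + 1), f n) hpartial).congr' ?_
  filter_upwards [eventually_ge_atTop a] with b hab
  rw [sum_coprimeIoc_one_div_eq_sub hab, Function.comp_apply, sub_eq_add_neg]

theorem sum_coprimeIoc_div_one_div_le (x : ℕ) {p : ℕ} (hp : 0 < p) :
    ∑ n ∈ coprimeIoc W (x / p) x, (1 : ℝ) / n ≤ p :=
  (sum_le_sum_of_subset_of_nonneg (filter_subset _ _) fun _ _ _ => by positivity).trans
    (sum_Ioc_div_one_div_le x hp)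

theorem coprimeIoc_filter_dvd {p : ℕ} (hp : 0 < p) (hpW : p.Coprime W) (a b : ℕ) :
    {n ∈ coprimeIoc W a b | p ∣ n} = (coprimeIoc W (a / p) (b / p)).image (p * ·) := by
  ext n
  simp only [coprimeIoc, mem_filter, mem_image, mem_Ioc]
  constructor
  · rintro ⟨⟨⟨han, hnb⟩, hn⟩, m, rfl⟩
    refine ⟨m, ⟨⟨?_, ?_⟩, Nat.Coprime.coprime_mul_left hn⟩, rfl⟩
    · rw [Nat.div_lt_iff_lt_mul hp]; linarith
    · rw [Nat.le_div_iff_mul_le hp]; linarith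
  · rintro ⟨m, ⟨⟨ham, hmb⟩, hm⟩, rfl⟩
    rw [Nat.div_lt_iff_lt_mul hp] at ham
    rw [Nat.le_div_iff_mul_le hp] at hmb
    exact ⟨⟨⟨by linarith, by linarith⟩, Nat.Coprime.mul_left hpW hm⟩, dvd_mul_right p m⟩

theorem mul_sum_coprimeIoc_filter_dvd {p : ℕ} (hp : 0 < p) (hpW : p.Coprime W) (a b : ℕ) :
    p * ∑ n ∈ coprimeIoc W a b with p ∣ n, (1 : ℝ) / n
      = ∑ m ∈ coprimeIoc W (a / p) (b / p), (1 : ℝ) / m := by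
  rw [coprimeIoc_filter_dvd hp hpW, sum_image fun m _ m' _ h => Nat.eq_of_mul_eq_mul_left hp h,
    mul_sum]
  refine sum_congr rfl fun m _ => ?_
  have : (p : ℝ) ≠ 0 := by positivity
  push_cast
  field_simp

theorem abs_mul_sum_coprimeIoc_filter_dvd_sub_le {p : ℕ} (hp : 0 < p) (hpW : p.Coprime W)
    {a b : ℕ} (hab : a ≤ b) :
    |p * ∑ n ∈ coprimeIoc W a b with p ∣ n, (1 : ℝ) / n - ∑ n ∈ coprimeIoc W a b, (1 : ℝ) / n|
      ≤ p := by
  have ha := sum_coprimeIoc_div_one_div_le (W := W) a hp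
  have hb := sum_coprimeIoc_div_one_div_le (W := W) b hp
  have ha₀ : 0 ≤ ∑ n ∈ coprimeIoc W (a / p) a, (1 : ℝ) / n := sum_nonneg fun _ _ => by positivity
  have hb₀ : 0 ≤ ∑ n ∈ coprimeIoc W (b / p) b, (1 : ℝ) / n := sum_nonneg fun _ _ => by positivity
  rw [sum_coprimeIoc_one_div_eq_sub (Nat.div_le_self a p)] at ha ha₀
  rw [sum_coprimeIoc_one_div_eq_sub (Nat.div_le_self b p)] at hb hb₀
  rw [mul_sum_coprimeIoc_filter_dvd hp hpW, sum_coprimeIoc_one_div_eq_sub hab,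
    sum_coprimeIoc_one_div_eq_sub (Nat.div_le_div_right hab), abs_le]
  constructor <;> linarith

theorem abs_logAvg_coprimeIoc_mul_ite_dvd_sub_one_le {p : ℕ} (hp : 0 < p) (hpW : p.Coprime W)
    {a b : ℕ} (hab : a ≤ b) (hA : 0 < ∑ n ∈ coprimeIoc W a b, (1 : ℝ) / n) :
    |logAvg (coprimeIoc W a b) (fun n => (p : ℝ) * if p ∣ n then 1 else 0) - 1|
      ≤ p / ∑ n ∈ coprimeIoc W a b, (1 : ℝ) / n := by
  rw [logAvg_natCast_mul_ite_dvd, div_sub_one hA.ne', abs_div, abs_of_pos hA]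
  exact div_le_div_of_nonneg_right (abs_mul_sum_coprimeIoc_filter_dvd_sub_le hp hpW hab) hA.le

end CoprimeIoc

theorem Nat.Prime.coprime_primorial {p w : ℕ} (hp : p.Prime) (hwp : w < p) :
    p.Coprime (primorial w) := by
  rw [hp.coprime_iff_not_dvd]
  intro hdvd
  have hmem := Nat.mem_primeFactors.2 ⟨hp, hdvd, (primorial_pos w).ne'⟩
  rw [primeFactors_primorial, Nat.mem_primesLE] at hmem
  omega

theorem sum_primesIoc_one_div_pos {H1 H2 : ℕ} (hH1 : H1 ≠ 0) (hH12 : 2 * H1 ≤ H2) :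
    0 < ∑ p ∈ primesIoc H1 H2, (1 : ℝ) / p := by
  obtain ⟨q, hq, hH1q, hq2⟩ := Nat.exists_prime_lt_and_le_two_mul H1 hH1
  refine sum_pos' (fun _ _ => by positivity) ⟨q, ?_, one_div_pos.2 (Nat.cast_pos.2 hq.pos)⟩
  exact mem_filter.2 ⟨mem_Ioc.2 ⟨hH1q, hq2.trans hH12⟩, hq⟩

/-- **First moment of the sieve weight.** There is an absolute constant `C > 0` such
that for `0 < ε < 1/2` and parameters `1/ε < w < H₁ < H₂ < H₃ < H₄`, with `w`
sufficiently large depending on `ε` and each of `H₁, H₂, H₃, H₄` sufficiently large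
depending on `ε` and the preceding parameters, with `W := ∏_{p ≤ w} p`, one has
`E^log_{H₃ < n ≤ H₄, (n,W)=1} g(n) = 1 + O(ε²)`. -/
theorem sieve_weight_first_moment :
    ∃ C : ℝ, 0 < C ∧ ∀ ε : ℝ, 0 < ε → ε < 1 / 2 →
      ∃ w0 : ℕ, ∀ w : ℕ, 1 / ε < (w : ℝ) → w0 ≤ w →
        ∃ H10 : ℕ, ∀ H1 : ℕ, w < H1 → H10 ≤ H1 →
          ∃ H20 : ℕ, ∀ H2 : ℕ, H1 < H2 → H20 ≤ H2 →
            ∃ H30 : ℕ, ∀ H3 : ℕ, H2 < H3 → H30 ≤ H3 →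
              ∃ H40 : ℕ, ∀ H4 : ℕ, H3 < H4 → H40 ≤ H4 →
                |logAvg ((Finset.Ioc H3 H4).filter
                      fun n => Nat.gcd n (primorialW w) = 1)
                    (fun n => sieveWeight H1 H2 n) - 1| ≤ C * ε ^ 2 := by
  refine ⟨1, one_pos, fun ε hε _ => ⟨0, fun w _ _ => ⟨0, fun H1 hwH1 _ =>
    ⟨2 * H1, fun H2 _ hH12 => ⟨0, fun H3 _ _ => ?_⟩⟩⟩⟩⟩
  have hdiv := tendsto_sum_coprimeIoc_one_div (primorial_pos w).ne' H3
  obtain ⟨H40, hH40⟩ := (hdiv.eventually_ge_atTop (H2 / ε ^ 2)).exists_forall_of_atTop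
  refine ⟨H40, fun H4 hH34 hH4 => ?_⟩
  change |logAvg (coprimeIoc (primorial w) H3 H4)
    (fun n => logAvg (primesIoc H1 H2) fun p => (p : ℝ) * if p ∣ n then 1 else 0) - 1| ≤ 1 * ε ^ 2
  have hA := hH40 H4 hH4
  have hH2 : (0 : ℝ) < H2 := by exact_mod_cast (show 0 < H2 by omega)
  have hA₀ : 0 < ∑ n ∈ coprimeIoc (primorial w) H3 H4, (1 : ℝ) / n :=
    lt_of_lt_of_le (by positivity) hA
  rw [div_le_iff₀ (by positivity)] at hA
  rw [one_mul, logAvg_comm]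
  refine abs_logAvg_sub_le (sum_primesIoc_one_div_pos (by omega) hH12) fun p hp => ?_
  obtain ⟨⟨hH1p, hpH2⟩, hprime⟩ : (H1 < p ∧ p ≤ H2) ∧ p.Prime := by
    simpa [primesIoc] using hp
  refine (abs_logAvg_coprimeIoc_mul_ite_dvd_sub_one_le hprime.pos
    (hprime.coprime_primorial (by omega)) hH34.le hA₀).trans ?_
  rw [div_le_iff₀' hA₀]
  exact (Nat.cast_le.2 hpH2).trans hA
end

section
/- Second moment of the sieve weight: there exists an absolute constant C > 0 such that for every 0 < ε < 1/2 the following holds for parameters 1/ε < w < H_1 < H_2 < H_3 < H_4 with w sufficiently large depending on ε and each of H_1, H_2, H_3, H_4 sufficiently large depending on ε and the preceding parameters, with W := ∏_{p ≤ w} p: |E^log_{H_3 < n ≤ H_4, gcd(n,W)=1} g(n)² − 1| ≤ C·ε², where g(n) := E^log_{H_1 < p ≤ H_2} p·1_{p ∣ n} (logarithmic average over primes p). -/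
open Finset Filter Topology

lemma logAvg_sum {ι : Type*} (A : Finset ℕ) (s : Finset ι) (f : ι → ℕ → ℝ) :
    logAvg A (fun n => ∑ i ∈ s, f i n) = ∑ i ∈ s, logAvg A (f i) := by
  simp only [logAvg, sum_div]
  rw [sum_comm]

lemma logAvg_const_mul (A : Finset ℕ) (c : ℝ) (f : ℕ → ℝ) :
    logAvg A (fun n => c * f n) = c * logAvg A f := by
  simp only [logAvg, mul_div_assoc, ← mul_sum]

lemma tendsto_sum_Ioc_atTop_of_not_summable {f : ℕ → ℝ} (hf : ∀ n, 0 ≤ f n)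
    (h : ¬ Summable f) (a : ℕ) : Tendsto (fun x => ∑ n ∈ Ioc a x, f n) atTop atTop := by
  rw [not_summable_iff_tendsto_nat_atTop_of_nonneg hf] at h
  refine (tendsto_atTop_add_const_right _ (-∑ n ∈ range (a + 1), f n)
    (h.comp (tendsto_add_atTop_nat 1))).congr' ?_
  filter_upwards [eventually_ge_atTop a] with x hx
  rw [← Ico_add_one_add_one_eq_Ioc, sum_Ico_eq_sub _ (by omega), Function.comp_apply,
    sub_eq_add_neg]

lemma tendsto_sum_filter_Ioc_one_div_atTop {S : Set ℕ} [DecidablePred (· ∈ S)]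
    (h : ¬ Summable (S.indicator fun n : ℕ => (1 : ℝ) / n)) (a : ℕ) :
    Tendsto (fun x => ∑ n ∈ (Ioc a x).filter (· ∈ S), (1 : ℝ) / n) atTop atTop := by
  simpa only [sum_filter, Set.indicator_apply] using
    tendsto_sum_Ioc_atTop_of_not_summable (Set.indicator_nonneg fun n _ => by positivity) h a

lemma not_summable_indicator_coprime_one_div {W : ℕ} (hW : W ≠ 0) :
    ¬ Summable ({n : ℕ | n.Coprime W}.indicator fun n : ℕ => (1 : ℝ) / n) := by
  refine fun hsum => Real.not_summable_indicator_one_div_natCast hW 1 <|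
    hsum.of_nonneg_of_le (Set.indicator_nonneg fun n _ => by positivity) fun n => ?_
  refine Set.indicator_le_indicator_of_subset (fun (m : ℕ) (hm : (m : ZMod W) = 1) => ?_)
    (fun m => by positivity) n
  exact (ZMod.isUnit_iff_coprime m W).mp (hm ▸ isUnit_one)

lemma sum_Ioc_div_one_div_le_s8 {d : ℕ} (hd : 0 < d) (y : ℕ) :
    ∑ m ∈ Ioc (y / d) y, (1 : ℝ) / m ≤ d := by
  have hy : (y : ℝ) < d * (y / d + 1 : ℕ) := by
    exact_mod_cast (Nat.lt_mul_div_succ y hd)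
  calc ∑ m ∈ Ioc (y / d) y, (1 : ℝ) / m ≤ #(Ioc (y / d) y) • ((1 : ℝ) / (y / d + 1 : ℕ)) := by
        refine sum_le_card_nsmul _ _ _ fun m hm => ?_
        exact one_div_le_one_div_of_le (by positivity) (by exact_mod_cast (mem_Ioc.mp hm).1)
    _ ≤ y * ((1 : ℝ) / (y / d + 1 : ℕ)) := by
        rw [nsmul_eq_mul, Nat.card_Ioc]
        gcongr
        exact_mod_cast Nat.sub_le y (y / d)
    _ ≤ d := by
        rw [mul_one_div, div_le_iff₀ (by positivity)]
        exact hy.le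

section Multiples

variable {S : Set ℕ} [DecidablePred (· ∈ S)] {d : ℕ}

lemma mul_sum_filter_Ioc_ite_dvd (hd : 0 < d) (hS : ∀ m, d * m ∈ S ↔ m ∈ S) (a x : ℕ) :
    d * ∑ n ∈ (Ioc a x).filter (· ∈ S), (if d ∣ n then (1 : ℝ) else 0) / n
      = ∑ m ∈ (Ioc (a / d) (x / d)).filter (· ∈ S), (1 : ℝ) / m := by
  have hmultiples : ((Ioc a x).filter (· ∈ S)).filter (d ∣ ·)
      = ((Ioc (a / d) (x / d)).filter (· ∈ S)).map ⟨(d * ·), mul_right_injective₀ hd.ne'⟩ := by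
    ext n
    simp only [mem_filter, Finset.mem_map, mem_Ioc, Function.Embedding.coeFn_mk,
      Nat.div_lt_iff_lt_mul hd, Nat.le_div_iff_mul_le hd]
    constructor
    · rintro ⟨⟨⟨han, hnx⟩, hnS⟩, m, rfl⟩
      exact ⟨m, ⟨⟨mul_comm d m ▸ han, mul_comm d m ▸ hnx⟩, (hS m).1 hnS⟩, rfl⟩
    · rintro ⟨m, ⟨⟨ham, hmx⟩, hmS⟩, rfl⟩
      exact ⟨⟨⟨mul_comm m d ▸ ham, mul_comm m d ▸ hmx⟩, (hS m).2 hmS⟩, dvd_mul_right d m⟩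
  simp only [ite_div, zero_div]
  rw [← sum_filter, hmultiples, sum_map, mul_sum]
  refine sum_congr rfl fun m _ => ?_
  have hd0 : (d : ℝ) ≠ 0 := by exact_mod_cast hd.ne'
  simp only [Function.Embedding.coeFn_mk, Nat.cast_mul]
  field_simp

lemma abs_mul_sum_filter_Ioc_ite_dvd_sub_le (hd : 0 < d) (hS : ∀ m, d * m ∈ S ↔ m ∈ S)
    {a x : ℕ} (hax : a ≤ x) :
    |d * ∑ n ∈ (Ioc a x).filter (· ∈ S), (if d ∣ n then (1 : ℝ) else 0) / n
      - ∑ n ∈ (Ioc a x).filter (· ∈ S), (1 : ℝ) / n| ≤ d := by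
  set T : ℕ → ℕ → ℝ := fun u v => ∑ n ∈ (Ioc u v).filter (· ∈ S), (1 : ℝ) / n
  have hconsec {u v w : ℕ} (huv : u ≤ v) (hvw : v ≤ w) : T u v + T v w = T u w := by
    simp only [T, sum_filter]
    exact sum_Ioc_consecutive _ huv hvw
  have htail (y : ℕ) : 0 ≤ T (y / d) y ∧ T (y / d) y ≤ d :=
    ⟨sum_nonneg fun n _ => by positivity, (sum_le_sum_of_subset_of_nonneg (filter_subset _ _)
      fun n _ _ => by positivity).trans (sum_Ioc_div_one_div_le_s8 hd y)⟩
  have h1 := hconsec (Nat.div_le_div_right hax) (Nat.div_le_self x d)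
  have h2 := hconsec (Nat.div_le_self a d) hax
  rw [mul_sum_filter_Ioc_ite_dvd hd hS, abs_le]
  constructor <;> linarith [htail a, htail x]

lemma tendsto_logAvg_ite_dvd (hd : 0 < d) (hS : ∀ m, d * m ∈ S ↔ m ∈ S) {a : ℕ}
    (hdiv : Tendsto (fun x => ∑ n ∈ (Ioc a x).filter (· ∈ S), (1 : ℝ) / n) atTop atTop) :
    Tendsto (fun x => logAvg ((Ioc a x).filter (· ∈ S)) fun n => if d ∣ n then 1 else 0)
      atTop (𝓝 (1 / d)) := by
  rw [tendsto_iff_norm_sub_tendsto_zero]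
  refine squeeze_zero_norm' ?_ (tendsto_inv_atTop_zero.comp hdiv)
  filter_upwards [eventually_ge_atTop a, hdiv.eventually_gt_atTop 0] with x hax hD
  have hd' : (0 : ℝ) < d := by exact_mod_cast hd
  set D := ∑ n ∈ (Ioc a x).filter (· ∈ S), (1 : ℝ) / n
  set N := ∑ n ∈ (Ioc a x).filter (· ∈ S), (if d ∣ n then (1 : ℝ) else 0) / n
  have hsplit : N / D - 1 / d = (d * N - D) / d / D := by field_simp
  calc ‖‖logAvg ((Ioc a x).filter (· ∈ S)) (fun n => if d ∣ n then 1 else 0) - 1 / d‖‖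
      = |d * N - D| / d / D := by
        rw [norm_norm, Real.norm_eq_abs, logAvg, hsplit, abs_div, abs_div, abs_of_pos hd',
          abs_of_pos hD]
    _ ≤ 1 / D := by
        gcongr
        exact (div_le_one hd').2 (abs_mul_sum_filter_Ioc_ite_dvd_sub_le hd hS hax)
    _ = D⁻¹ := one_div D

end Multiples

lemma sq_sum_ite_dvd (s : Finset ℕ) (n : ℕ) :
    (∑ p ∈ s, if p ∣ n then (1 : ℝ) else 0) ^ 2
      = ∑ p ∈ s, ∑ q ∈ s, if p.lcm q ∣ n then 1 else 0 := by
  simp only [sq, sum_mul_sum, Nat.lcm_dvd_iff, ite_zero_mul_ite_zero, one_mul, ite_and]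

lemma sum_sum_one_div_lcm {P : Finset ℕ} (hP : ∀ p ∈ P, p.Prime) :
    ∑ p ∈ P, ∑ q ∈ P, (1 : ℝ) / p.lcm q
      = (∑ p ∈ P, (1 : ℝ) / p) ^ 2 + ∑ p ∈ P, ((1 : ℝ) / p - 1 / (p : ℝ) ^ 2) := by
  have hlcm : ∀ p ∈ P, ∀ q ∈ P, (1 : ℝ) / p.lcm q
      = 1 / p * (1 / q) + if p = q then 1 / p - 1 / (p : ℝ) ^ 2 else 0 := by
    intro p hp q hq
    split_ifs with h
    · subst h; simp only [Nat.lcm_self]; ring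
    · rw [((Nat.coprime_primes (hP p hp) (hP q hq)).mpr h).lcm_eq_mul]
      push_cast; ring
  rw [sum_congr rfl fun p hp => sum_congr rfl (hlcm p hp)]
  simp only [sum_add_distrib, sum_ite_eq, ← mul_sum, ← sum_mul, sq]
  simp

lemma abs_sum_sum_one_div_lcm_sub_one_le {P : Finset ℕ} (hP : ∀ p ∈ P, p.Prime)
    (hL : 0 < ∑ p ∈ P, (1 : ℝ) / p) :
    |(∑ p ∈ P, (1 : ℝ) / p)⁻¹ ^ 2 * ∑ p ∈ P, ∑ q ∈ P, (1 : ℝ) / p.lcm q - 1|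
      ≤ (∑ p ∈ P, (1 : ℝ) / p)⁻¹ := by
  set L := ∑ p ∈ P, (1 : ℝ) / p
  set E := ∑ p ∈ P, ((1 : ℝ) / p - 1 / (p : ℝ) ^ 2)
  have hE : 0 ≤ E ∧ E ≤ L := by
    refine ⟨sum_nonneg fun p hp => ?_, sum_le_sum fun p _ => sub_le_self _ (by positivity)⟩
    have hp : (1 : ℝ) ≤ p := by exact_mod_cast (hP p hp).one_lt.le
    rw [sub_nonneg, sq]
    exact div_le_div_of_nonneg_left zero_le_one (by positivity) (by nlinarith)
  have hexcess : L⁻¹ ^ 2 * (L ^ 2 + E) - 1 = E / L ^ 2 := by field_simp; ring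
  rw [sum_sum_one_div_lcm hP, hexcess, abs_of_nonneg (div_nonneg hE.1 (sq_nonneg L)),
    div_le_iff₀ (by positivity)]
  calc E ≤ L := hE.2
    _ = L⁻¹ * L ^ 2 := by field_simp

lemma mem_primesIoc {H1 H2 p : ℕ} : p ∈ primesIoc H1 H2 ↔ H1 < p ∧ p ≤ H2 ∧ p.Prime := by
  rw [primesIoc, mem_filter, mem_Ioc, and_assoc]

lemma sieveWeight_eq (H1 H2 n : ℕ) :
    sieveWeight H1 H2 n = (∑ p ∈ primesIoc H1 H2, (1 : ℝ) / p)⁻¹ *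
      ∑ p ∈ primesIoc H1 H2, if p ∣ n then 1 else 0 := by
  rw [sieveWeight, logAvg, div_eq_inv_mul]
  congr 1
  refine sum_congr rfl fun p hp => ?_
  have hp0 : (p : ℝ) ≠ 0 := by exact_mod_cast (mem_primesIoc.1 hp).2.2.ne_zero
  split_ifs <;> field_simp

lemma logAvg_sieveWeight_sq (A : Finset ℕ) (H1 H2 : ℕ) :
    logAvg A (fun n => sieveWeight H1 H2 n ^ 2) =
      (∑ p ∈ primesIoc H1 H2, (1 : ℝ) / p)⁻¹ ^ 2 * ∑ p ∈ primesIoc H1 H2,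
        ∑ q ∈ primesIoc H1 H2, logAvg A fun n => if p.lcm q ∣ n then 1 else 0 := by
  simp only [sieveWeight_eq, mul_pow, sq_sum_ite_dvd, logAvg_const_mul, logAvg_sum]

lemma tendsto_sum_primesIoc_one_div_atTop (H1 : ℕ) :
    Tendsto (fun H2 => ∑ p ∈ primesIoc H1 H2, (1 : ℝ) / p) atTop atTop :=
  tendsto_sum_filter_Ioc_one_div_atTop (S := {p | p.Prime}) not_summable_one_div_on_primes H1

lemma coprime_primorialW_of_lt {w p : ℕ} (hp : p.Prime) (hwp : w < p) :
    p.Coprime (primorialW w) :=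
  hp.coprime_iff_not_dvd.2 fun h => (hp.dvd_primorial_iff.1 h).not_gt hwp

lemma tendsto_logAvg_sieveWeight_sq {w H1 : ℕ} (hw : w < H1) (H2 H3 : ℕ) :
    Tendsto (fun x => logAvg ((Ioc H3 x).filter fun n => n.gcd (primorialW w) = 1)
        fun n => sieveWeight H1 H2 n ^ 2) atTop
      (𝓝 ((∑ p ∈ primesIoc H1 H2, (1 : ℝ) / p)⁻¹ ^ 2 *
        ∑ p ∈ primesIoc H1 H2, ∑ q ∈ primesIoc H1 H2, (1 : ℝ) / p.lcm q)) := by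
  simp only [logAvg_sieveWeight_sq]
  refine tendsto_const_nhds.mul
    (tendsto_finsetSum _ fun p hp => tendsto_finsetSum _ fun q hq => ?_)
  obtain ⟨hH1p, -, hpP⟩ := mem_primesIoc.1 hp
  obtain ⟨hH1q, -, hqP⟩ := mem_primesIoc.1 hq
  have hcop : (p.lcm q).Coprime (primorialW w) :=
    ((coprime_primorialW_of_lt hpP (hw.trans hH1p)).mul_left
      (coprime_primorialW_of_lt hqP (hw.trans hH1q))).coprime_dvd_left (Nat.lcm_dvd_mul p q)
  exact tendsto_logAvg_ite_dvd (S := {n | n.Coprime (primorialW w)})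
    (Nat.lcm_pos hpP.pos hqP.pos) (fun m => Nat.coprime_mul_iff_left.trans (and_iff_right hcop))
    (tendsto_sum_filter_Ioc_one_div_atTop
      (not_summable_indicator_coprime_one_div (primorial_ne_zero w)) H3)

/-- **Second moment of the sieve weight.** There is an absolute constant `C > 0` such
that for `0 < ε < 1/2` and parameters `1/ε < w < H₁ < H₂ < H₃ < H₄`, with `w`
sufficiently large depending on `ε` and each of `H₁, H₂, H₃, H₄` sufficiently large
depending on `ε` and the preceding parameters, with `W := ∏_{p ≤ w} p`, one has
`E^log_{H₃ < n ≤ H₄, (n,W)=1} g(n)² = 1 + O(ε²)`. -/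
theorem sieve_weight_second_moment :
    ∃ C : ℝ, 0 < C ∧ ∀ ε : ℝ, 0 < ε → ε < 1 / 2 →
      ∃ w0 : ℕ, ∀ w : ℕ, 1 / ε < (w : ℝ) → w0 ≤ w →
        ∃ H10 : ℕ, ∀ H1 : ℕ, w < H1 → H10 ≤ H1 →
          ∃ H20 : ℕ, ∀ H2 : ℕ, H1 < H2 → H20 ≤ H2 →
            ∃ H30 : ℕ, ∀ H3 : ℕ, H2 < H3 → H30 ≤ H3 →
              ∃ H40 : ℕ, ∀ H4 : ℕ, H3 < H4 → H40 ≤ H4 →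
                |logAvg ((Finset.Ioc H3 H4).filter
                      fun n => Nat.gcd n (primorialW w) = 1)
                    (fun n => (sieveWeight H1 H2 n) ^ 2) - 1| ≤ C * ε ^ 2 := by
  refine ⟨1, one_pos, fun ε hε _ => ⟨0, fun w _ _ => ⟨0, fun H1 hwH1 _ => ?_⟩⟩⟩
  obtain ⟨H20, hH20⟩ := eventually_atTop.1
    ((tendsto_sum_primesIoc_one_div_atTop H1).eventually_ge_atTop (2 / ε ^ 2))
  refine ⟨H20, fun H2 _ hH2 => ⟨0, fun H3 _ _ => ?_⟩⟩
  have hL := hH20 H2 hH2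
  have hlimit := (abs_sum_sum_one_div_lcm_sub_one_le (fun _ hp => (mem_primesIoc.1 hp).2.2)
      ((by positivity : 0 < 2 / ε ^ 2).trans_le hL)).trans
    ((inv_anti₀ (by positivity) hL).trans_eq (inv_div _ _))
  obtain ⟨H40, hH40⟩ := Metric.tendsto_atTop.1 (tendsto_logAvg_sieveWeight_sq hwH1 H2 H3)
    (ε ^ 2 / 2) (by positivity)
  refine ⟨H40, fun H4 _ hH4 => ?_⟩
  have hclose := hH40 H4 hH4
  rw [Real.dist_eq, abs_lt] at hclose
  rw [abs_le] at hlimit ⊢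
  constructor <;> linarith
end

section
/- Key dilation identity: there is a constant C > 0 depending only on k, a_1,…,a_k, b_1,…,b_k such that for every 0 < ε ≤ 1/2, every natural number a, every real x ≥ exp(exp(exp(a·ε^{−3}))), and every prime p ≤ log x, one has |f_x(a) − (−1)^k f_x(ap) − (−1)^k · E^log_{n ≤ x} λ(a_1 n + a p b_1)⋯λ(a_k n + a p b_k)·(p·1_{p∣n} − 1)| ≤ C·ε. -/
/-!
Write `g_d(n) = ∏ λ(a_i n + d b_i)`. Since `λ(pm) = -λ(m)`, one has `g_{ap}(pm) = (-1)^k g_a(m)`,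
so the weight `p 1_{p ∣ n}` turns the sum of `g_{ap}(n)/n` over `n ≤ x` into the sum of
`(-1)^k g_a(m)/m` over `m ≤ x/p`. After this substitution the left-hand side is exactly
`(∑_{x/p < n ≤ x} g_a(n)/n) / ∑_{n ≤ x} 1/n`. The numerator is at most
`∑_{x/p < n ≤ x} 1/n ≤ 1 + log p ≤ 1 + log log x` and the denominator is at least `log x`,
so the error is at most `2 / log log x`, which is at most `ε` once `log log x ≥ exp(a ε⁻³)`.
Hence `C = 1` works.
-/

noncomputable def liouville (n : ℕ) : ℝ :=
  (-1 : ℝ) ^ (ArithmeticFunction.cardFactors n)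

/-- `f_x(a) := E^log_{n ≤ x} λ(a₁ n + a b₁) ⋯ λ(a_k n + a b_k)`. -/
noncomputable def corr (k : ℕ) (a b : Fin k → ℕ) (x : ℝ) (d : ℕ) : ℝ :=
  logAvg (Finset.Icc 1 ⌊x⌋₊) fun n => ∏ i, liouville (a i * n + d * b i)

open Finset Real

theorem abs_liouville (n : ℕ) : |liouville n| = 1 := by
  simp [liouville, abs_pow]

theorem liouville_prime_mul {p n : ℕ} (hp : p.Prime) (hn : n ≠ 0) :
    liouville (p * n) = -liouville n := by
  simp only [liouville, ArithmeticFunction.cardFactors_mul hp.ne_zero hn,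
    ArithmeticFunction.cardFactors_apply_prime hp, pow_add, pow_one, neg_one_mul]

theorem prod_liouville_prime_mul {ι : Type*} [Fintype ι] {p : ℕ} (hp : p.Prime) {f : ι → ℕ}
    (hf : ∀ i, f i ≠ 0) :
    ∏ i, liouville (p * f i) = (-1) ^ Fintype.card ι * ∏ i, liouville (f i) := by
  rw [← card_univ, ← prod_const, ← prod_mul_distrib]
  exact prod_congr rfl fun i _ => by rw [liouville_prime_mul hp (hf i), neg_one_mul]

theorem prod_liouville_dilation {ι : Type*} [Fintype ι] (a : ι → ℕ) {b : ι → ℕ}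
    (hb : ∀ i, 1 ≤ b i) {A p : ℕ} (hA : 1 ≤ A) (hp : p.Prime) (m : ℕ) :
    ∏ i, liouville (a i * (p * m) + A * p * b i)
      = (-1) ^ Fintype.card ι * ∏ i, liouville (a i * m + A * b i) := by
  have hmul (i : ι) : a i * (p * m) + A * p * b i = p * (a i * m + A * b i) := by ring
  simp only [hmul]
  exact prod_liouville_prime_mul hp fun i => (Nat.add_pos_right _ (Nat.mul_pos hA (hb i))).ne'

theorem filter_dvd_Icc_one_eq_map {p : ℕ} (hp : 0 < p) (M : ℕ) :
    {n ∈ Icc 1 M | p ∣ n} = (Icc 1 (M / p)).map ⟨(p * ·), mul_right_injective₀ hp.ne'⟩ := by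
  ext n
  simp only [mem_filter, mem_Icc, mem_map, Function.Embedding.coeFn_mk]
  constructor
  · rintro ⟨⟨hn, hnM⟩, m, rfl⟩
    exact ⟨m, ⟨Nat.pos_of_mul_pos_left hn, (Nat.le_div_iff_mul_le hp).2 (by linarith)⟩, rfl⟩
  · rintro ⟨m, ⟨hm, hmM⟩, rfl⟩
    exact ⟨⟨Nat.mul_pos hp hm, by nlinarith [Nat.div_mul_le_self M p]⟩, dvd_mul_right p m⟩

theorem sum_Icc_dvd_mul_div {p : ℕ} (hp : 0 < p) (M : ℕ) (f : ℕ → ℝ) :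
    ∑ n ∈ Icc 1 M, f n * (p * if p ∣ n then 1 else 0) / n
      = ∑ m ∈ Icc 1 (M / p), f (p * m) / m := by
  have hp' : (p : ℝ) ≠ 0 := by exact_mod_cast hp.ne'
  simp only [mul_ite, mul_one, mul_zero, ite_div, zero_div]
  rw [← sum_filter, filter_dvd_Icc_one_eq_map hp, sum_map]
  refine sum_congr rfl fun m _ => ?_
  simp only [Function.Embedding.coeFn_mk, Nat.cast_mul]
  rw [mul_comm (p : ℝ), mul_div_mul_right _ _ hp']

theorem sum_Icc_sub_sum_Icc_div (p M : ℕ) (g : ℕ → ℝ) :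
    ∑ n ∈ Icc 1 M, g n - ∑ n ∈ Icc 1 (M / p), g n = ∑ n ∈ Ioc (M / p) M, g n := by
  have hIcc (N : ℕ) : Icc 1 N = Ioc 0 N := Icc_add_one_left_eq_Ioc 0 N
  rw [sub_eq_iff_eq_add', hIcc, hIcc, sum_Ioc_consecutive _ (Nat.zero_le _) (Nat.div_le_self M p)]

theorem logAvg_sub_dilation {f g : ℕ → ℝ} {s : ℝ} (hs : s * s = 1) {p : ℕ} (hp : 0 < p)
    (hfg : ∀ m, f (p * m) = s * g m) (M : ℕ) :
    logAvg (Icc 1 M) g - s * logAvg (Icc 1 M) f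
        - s * logAvg (Icc 1 M) (fun n => f n * (p * (if p ∣ n then 1 else 0) - 1))
      = (∑ n ∈ Ioc (M / p) M, g n / n) / ∑ n ∈ Icc 1 M, (1 : ℝ) / n := by
  have hsplit : ∑ n ∈ Icc 1 M, f n * (p * (if p ∣ n then 1 else 0) - 1) / n
      = s * ∑ m ∈ Icc 1 (M / p), g m / m - ∑ n ∈ Icc 1 M, f n / n := by
    simp only [mul_sub, mul_one, sub_div, sum_sub_distrib]
    rw [sum_Icc_dvd_mul_div hp, mul_sum]
    simp only [hfg, mul_div_assoc]
  rw [logAvg, logAvg, logAvg, hsplit, ← sum_Icc_sub_sum_Icc_div p M]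
  linear_combination (-(∑ m ∈ Icc 1 (M / p), g m / m) / ∑ n ∈ Icc 1 M, (1 : ℝ) / n) * hs

theorem log_le_log_mul_div_add_one {p : ℕ} (hp : 0 < p) (M : ℕ) :
    log M ≤ log p + log (M / p + 1 : ℕ) := by
  rcases M.eq_zero_or_pos with rfl | hM
  · simp only [Nat.cast_zero, log_zero]
    exact add_nonneg (log_natCast_nonneg p) (log_natCast_nonneg _)
  rw [← log_mul (by positivity) (by positivity)]
  exact log_le_log (by positivity) (by exact_mod_cast (Nat.lt_mul_div_succ M hp).le)

theorem sum_Ioc_div_inv_le {p : ℕ} (hp : 0 < p) (M : ℕ) :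
    ∑ n ∈ Ioc (M / p) M, (n : ℝ)⁻¹ ≤ 1 + log p := by
  have hH (N : ℕ) : (harmonic N : ℝ) = ∑ n ∈ Icc 1 N, (n : ℝ)⁻¹ := by
    simp [harmonic_eq_sum_Icc]
  rw [← sum_Icc_sub_sum_Icc_div, ← hH, ← hH]
  linarith [harmonic_le_one_add_log M, log_add_one_le_harmonic (M / p),
    log_le_log_mul_div_add_one hp M]

theorem abs_sum_Ioc_div_le {g : ℕ → ℝ} (hg : ∀ n, |g n| ≤ 1) {p : ℕ} (hp : 0 < p) (M : ℕ) :
    |∑ n ∈ Ioc (M / p) M, g n / n| ≤ 1 + log p := by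
  refine (abs_sum_le_sum_abs _ _).trans ((sum_le_sum fun n _ => ?_).trans (sum_Ioc_div_inv_le hp M))
  rw [abs_div, Nat.abs_cast, div_eq_mul_inv]
  exact mul_le_of_le_one_left (by positivity) (hg n)

theorem one_add_log_div_le {L : ℝ} (hL : 1 < L) : (1 + log L) / L ≤ 2 / log L := by
  have ht : 0 < log L := log_pos hL
  have hexp := quadratic_le_exp_of_nonneg ht.le
  rw [exp_log (by linarith)] at hexp
  rw [div_le_div_iff₀ (by linarith) ht]
  nlinarith

theorem two_div_le_of_exp_le {ε A t : ℝ} (hε : 0 < ε) (hε2 : ε ≤ 1 / 2) (hA : 1 ≤ A)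
    (ht : exp (A * ε ^ (-3 : ℤ)) ≤ t) : 2 / t ≤ ε := by
  have hinv : (ε ^ 3)⁻¹ ≤ t := calc
    (ε ^ 3)⁻¹ ≤ A * ε ^ (-3 : ℤ) := by
      rw [zpow_neg, zpow_ofNat]
      exact le_mul_of_one_le_left (by positivity) hA
    _ ≤ exp (A * ε ^ (-3 : ℤ)) := (le_add_of_nonneg_right zero_le_one).trans (add_one_le_exp _)
    _ ≤ t := ht
  calc 2 / t ≤ 2 / (ε ^ 3)⁻¹ := by gcongr
    _ = 2 * ε ^ 3 := div_inv_eq_mul _ _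
    _ ≤ ε := by nlinarith [mul_pos hε hε]

theorem log_le_sum_Icc_one_div {x : ℝ} (hx : 0 ≤ x) :
    log x ≤ ∑ n ∈ Icc 1 ⌊x⌋₊, (1 : ℝ) / n := by
  simpa [harmonic_eq_sum_Icc] using log_le_harmonic_floor x hx

theorem key_dilation_identity_general (k : ℕ)
    (a b : Fin k → ℕ) (hb : ∀ i, 1 ≤ b i) :
    ∃ C : ℝ, 0 < C ∧ ∀ ε : ℝ, 0 < ε → ε ≤ 1 / 2 → ∀ A : ℕ, 1 ≤ A →
      ∀ x : ℝ, Real.exp (Real.exp (Real.exp (A * ε ^ (-3 : ℤ)))) ≤ x →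
        ∀ p : ℕ, p.Prime → (p : ℝ) ≤ Real.log x →
          |corr k a b x A - (-1 : ℝ) ^ k * corr k a b x (A * p) -
              (-1 : ℝ) ^ k *
                logAvg (Finset.Icc 1 ⌊x⌋₊) (fun n =>
                  (∏ i, liouville (a i * n + A * p * b i)) *
                    ((p : ℝ) * (if p ∣ n then 1 else 0) - 1))| ≤ C * ε := by
  refine ⟨1, one_pos, fun ε hε hε2 A hA x hx p hp hpx => ?_⟩
  have hlogx : exp (exp (A * ε ^ (-3 : ℤ))) ≤ log x := by
    simpa using log_le_log (exp_pos _) hx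
  have hloglogx : exp (A * ε ^ (-3 : ℤ)) ≤ log (log x) := by
    simpa using log_le_log (exp_pos _) hlogx
  have hx1 : 1 < log x := (one_lt_exp_iff.2 (exp_pos _)).trans_le hlogx
  have hD : log x ≤ ∑ n ∈ Icc 1 ⌊x⌋₊, (1 : ℝ) / n :=
    log_le_sum_Icc_one_div ((exp_pos _).le.trans hx)
  rw [corr, corr, logAvg_sub_dilation (by rw [← mul_pow]; norm_num) hp.pos
      (by simpa only [Fintype.card_fin] using prod_liouville_dilation a hb hA hp),
    one_mul, abs_div, abs_of_pos (a := ∑ n ∈ Icc 1 ⌊x⌋₊, (1 : ℝ) / n) (by linarith)]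
  calc |∑ n ∈ Ioc (⌊x⌋₊ / p) ⌊x⌋₊, (∏ i, liouville (a i * n + A * b i)) / n|
        / ∑ n ∈ Icc 1 ⌊x⌋₊, (1 : ℝ) / n
      ≤ (1 + log p) / log x := by
        refine div_le_div₀ (by positivity) (abs_sum_Ioc_div_le (fun n => ?_) hp.pos _)
          (by linarith) hD
        simp [abs_prod, abs_liouville]
    _ ≤ (1 + log (log x)) / log x := by gcongr; exact_mod_cast hp.pos
    _ ≤ 2 / log (log x) := one_add_log_div_le hx1
    _ ≤ ε := two_div_le_of_exp_le hε hε2 (by exact_mod_cast hA) hloglogx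

/-- **Key dilation identity.** There is a constant `C > 0` depending only on
`k, a₁,…,a_k, b₁,…,b_k` such that for every `0 < ε ≤ 1/2`, every natural number `a`,
every `x ≥ exp(exp(exp(a ε⁻³)))` and every prime `p ≤ log x`, one has
`f_x(a) - (-1)^k f_x(ap) = (-1)^k E^log_{n ≤ x} λ(a₁n + apb₁)⋯λ(a_k n + apb_k)(p 1_{p ∣ n} - 1) + O(ε)`. -/
theorem key_dilation_identity (k : ℕ) (hk : 1 ≤ k)
    (a b : Fin k → ℕ) (ha : ∀ i, 1 ≤ a i) (hb : ∀ i, 1 ≤ b i) :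
    ∃ C : ℝ, 0 < C ∧ ∀ ε : ℝ, 0 < ε → ε ≤ 1 / 2 → ∀ A : ℕ, 1 ≤ A →
      ∀ x : ℝ, Real.exp (Real.exp (Real.exp (A * ε ^ (-3 : ℤ)))) ≤ x →
        ∀ p : ℕ, p.Prime → (p : ℝ) ≤ Real.log x →
          |corr k a b x A - (-1 : ℝ) ^ k * corr k a b x (A * p) -
              (-1 : ℝ) ^ k *
                logAvg (Finset.Icc 1 ⌊x⌋₊) (fun n =>
                  (∏ i, liouville (a i * n + A * p * b i)) *
                    ((p : ℝ) * (if p ∣ n then 1 else 0) - 1))| ≤ C * ε :=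
  key_dilation_identity_general k a b hb
end

section
/- Concentration for the divisibility averages: there exist absolute constants c, C > 0 such that the following holds. Let k, m, a, a_1,…,a_k, b_1,…,b_k be natural numbers, let c_p ∈ {−1,0,+1} for each prime p ∈ (2^m, 2^{m+1}], let (b_{i,r}) be a fixed family of signs in {−1,+1} indexed by 1 ≤ i ≤ k and natural numbers r (covering all indices a_i j + a p b_i occurring below), and let (n_p)_{2^m < p ≤ 2^{m+1}} be jointly independent random variables with n_p uniformly distributed on ℤ/pℤ. Define W_p := E_{j ≤ 2^m} c_p · b_{1, a_1 j + a p b_1}⋯b_{k, a_k j + a p b_k}·(p·1_{n_p + j ≡ 0 (mod p)} − 1), where the average is over integers 1 ≤ j ≤ 2^m. Then the W_p are jointly independent, bounded in magnitude by an absolute constant, have mean zero, and for every 0 < ε ≤ 1, P(|E_{2^m < p ≤ 2^{m+1}} W_p| ≥ ε) ≤ C·exp(−c·ε²·2^m/m), where the average is the unweighted average over primes p ∈ (2^m, 2^{m+1}]. -/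
/-!
Each `W_p` is a function of `n_p` alone, so the `W_p` inherit the independence of the `n_p`.
For fixed `j` exactly one residue `n_p` makes `p ∣ n_p + j`, which gives mean zero; and since
the window `1 ≤ j ≤ 2^m` is shorter than `p`, at most one `j` is hit, so `|W_p| ≤ 3`.
Hoeffding's inequality then bounds the tail probability by `2 exp(-ε² N / 18)`, where `N` is the
number of primes in `(2^m, 2^(m+1)]`, and Erdős' argument from the proof of Bertrand's postulate
(comparing `4^n / n < C(2n, n)` with the prime factorisation of `C(2n, n)`) gives
`N ≥ 2^m / (2^14 m)`.
-/

open MeasureTheory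

/-- The set of primes in the interval `(2^m, 2^(m+1)]`. -/
noncomputable def primesIn (m : ℕ) : Finset ℕ :=
  (Finset.Ioc (2 ^ m) (2 ^ (m + 1))).filter Nat.Prime

/-- The random variable
`W_p := E_{j ≤ 2^m} c_p b_{1, a_1 j + a p b_1} ⋯ b_{k, a_k j + a p b_k} (p 1_{n_p + j ≡ 0 (p)} - 1)`,
as a function of the value `npv` of `n_p`. -/
noncomputable def Wp (k : ℕ) (a b : Fin k → ℕ) (A m : ℕ) (cp : ℕ → ℝ)
    (bs : Fin k → ℕ → ℝ) (p : ℕ) (npv : ℕ) : ℝ :=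
  ((2 ^ m : ℕ) : ℝ)⁻¹ *
    ∑ j ∈ Finset.Icc 1 (2 ^ m),
      cp p * (∏ i, bs i (a i * j + A * p * b i)) *
        ((p : ℝ) * (if (npv + j) % p = 0 then 1 else 0) - 1)


namespace Nat

lemma eq_of_add_mod_eq_zero {p a b c : ℕ} (ha : a < p) (hb : b < p)
    (hca : (c + a) % p = 0) (hcb : (c + b) % p = 0) : a = b := by
  have h : c + a ≡ c + b [MOD p] := hca.trans hcb.symm
  exact (Nat.ModEq.add_left_cancel' c h).eq_of_lt_of_lt ha hb

lemma card_filter_add_mod_eq_zero_le_one {p c : ℕ} {s : Finset ℕ} (hs : ∀ a ∈ s, a < p) :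
    (s.filter fun a => (c + a) % p = 0).card ≤ 1 := by
  refine Finset.card_le_one.2 fun a ha b hb => ?_
  rw [Finset.mem_filter] at ha hb
  exact eq_of_add_mod_eq_zero (hs a ha.1) (hs b hb.1) ha.2 hb.2

lemma card_filter_range_add_mod_eq_zero {p : ℕ} (hp : 0 < p) (c : ℕ) :
    ((Finset.range p).filter fun t => (t + c) % p = 0).card = 1 := by
  simp_rw [add_comm _ c]
  have hle := card_filter_add_mod_eq_zero_le_one (p := p) (c := c)
    (s := Finset.range p) fun a ha => Finset.mem_range.1 ha
  have hmem : (p - c % p) % p ∈ (Finset.range p).filter fun t => (c + t) % p = 0 := by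
    refine Finset.mem_filter.2 ⟨Finset.mem_range.2 (Nat.mod_lt _ hp), ?_⟩
    have hc := Nat.mod_add_div c p
    have hcp := Nat.mod_lt c hp
    rw [Nat.add_mod_mod, show c + (p - c % p) = p * (c / p + 1) by rw [mul_add]; omega,
      Nat.mul_mod_right]
  have := Finset.card_pos.2 ⟨_, hmem⟩
  omega

end Nat

section Wp

variable {k : ℕ} {a b : Fin k → ℕ} {A m : ℕ} {cp : ℕ → ℝ} {bs : Fin k → ℕ → ℝ}

lemma sum_range_Wp_eq_zero {p : ℕ} (hp : 0 < p) :
    ∑ t ∈ Finset.range p, Wp k a b A m cp bs p t = 0 := by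
  have hj : ∀ j, ∑ t ∈ Finset.range p,
      ((p : ℝ) * (if (t + j) % p = 0 then 1 else 0) - 1) = 0 := fun j => by
    rw [Finset.sum_sub_distrib, ← Finset.mul_sum, Finset.sum_boole,
      Nat.card_filter_range_add_mod_eq_zero hp]
    simp
  simp only [Wp]
  rw [← Finset.mul_sum, Finset.sum_comm, Finset.sum_eq_zero, mul_zero]
  intro j _
  rw [← Finset.mul_sum, hj, mul_zero]

lemma abs_Wp_le_three {p : ℕ} (hp : 2 ^ m < p) (hp' : p ≤ 2 ^ (m + 1)) (hcp : |cp p| ≤ 1)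
    (hbs : ∀ i r, |bs i r| ≤ 1) (v : ℕ) :
    |Wp k a b A m cp bs p v| ≤ 3 := by
  set n := 2 ^ m
  set hits := (Finset.Icc 1 n).filter fun j => (v + j) % p = 0
  have hcard : hits.card ≤ 1 :=
    Nat.card_filter_add_mod_eq_zero_le_one fun j hj => (Finset.mem_Icc.1 hj).2.trans_lt hp
  have hterm : ∀ j, |cp p * (∏ i, bs i (a i * j + A * p * b i)) *
      ((p : ℝ) * (if (v + j) % p = 0 then 1 else 0) - 1)| ≤
      (p : ℝ) * (if (v + j) % p = 0 then 1 else 0) + 1 := fun j => by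
    have hprod : |∏ i, bs i (a i * j + A * p * b i)| ≤ 1 := by
      rw [Finset.abs_prod]
      exact Finset.prod_le_one (fun _ _ => abs_nonneg _) fun i _ => hbs i _
    rw [abs_mul, abs_mul]
    refine (mul_le_of_le_one_left (abs_nonneg _)
      (mul_le_one₀ hcp (abs_nonneg _) hprod)).trans ((abs_sub _ _).trans ?_)
    split_ifs <;> simp
  have hsum :
      ∑ j ∈ Finset.Icc 1 n, ((p : ℝ) * (if (v + j) % p = 0 then 1 else 0) + 1) ≤ 3 * n := by
    rw [Finset.sum_add_distrib, ← Finset.mul_sum, Finset.sum_boole]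
    have : (p : ℝ) ≤ 2 * n := by exact_mod_cast hp'.trans_eq (pow_succ' 2 m)
    have : (hits.card : ℝ) ≤ 1 := by exact_mod_cast hcard
    simp only [Nat.card_Icc, Finset.sum_const, nsmul_eq_mul, mul_one, Nat.add_sub_cancel]
    nlinarith
  have hn : (0 : ℝ) < n := by positivity
  rw [Wp, abs_mul, abs_inv, Nat.abs_cast, inv_mul_le_iff₀ (by exact_mod_cast hn)]
  calc _ ≤ _ := Finset.abs_sum_le_sum_abs _ _
    _ ≤ _ := Finset.sum_le_sum fun j _ => hterm j
    _ ≤ _ := hsum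
    _ = _ := mul_comm _ _

end Wp

namespace Nat

lemma prod_pow_factorization_centralBinom_le {n : ℕ} (hn : 0 < n) :
    ∏ p ∈ Finset.range (2 * n / 3 + 1), p ^ (centralBinom n).factorization p ≤
      (2 * n) ^ sqrt (2 * n) * 4 ^ (2 * n / 3) := by
  set f : ℕ → ℕ := fun p => p ^ (centralBinom n).factorization p
  set S := (Finset.range (2 * n / 3 + 1)).filter Nat.Prime
  have hS : ∏ p ∈ S, f p = ∏ p ∈ Finset.range (2 * n / 3 + 1), f p :=
    Finset.prod_filter_of_ne fun p _ h => by
      contrapose h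
      simp [f, factorization_eq_zero_of_not_prime _ h]
  rw [← hS, ← Finset.prod_filter_mul_prod_filter_not S (· ≤ sqrt (2 * n))]
  apply mul_le_mul'
  · refine (Finset.prod_le_prod' fun p _ => (?_ : f p ≤ 2 * n)).trans ?_
    · exact pow_factorization_choose_le (by omega)
    rw [Finset.prod_const]
    refine pow_right_mono₀ (by omega) ((Finset.card_le_card fun x hx => ?_).trans
      (card_Icc 1 (sqrt (2 * n))).le)
    obtain ⟨h1, h2⟩ := Finset.mem_filter.1 hx
    exact Finset.mem_Icc.2 ⟨(Finset.mem_filter.1 h1).2.one_lt.le, h2⟩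
  · refine le_trans ?_ (primorial_le_four_pow (2 * n / 3))
    refine (Finset.prod_le_prod' fun p hp => (?_ : f p ≤ p)).trans ?_
    · obtain ⟨h1, h2⟩ := Finset.mem_filter.1 hp
      refine (pow_right_mono₀ (Finset.mem_filter.1 h1).2.one_lt.le ?_).trans (pow_one p).le
      exact factorization_choose_le_one (sqrt_lt'.1 (not_le.1 h2))
    refine Finset.prod_le_prod_of_subset_of_one_le' (Finset.filter_subset _ _) ?_
    exact fun p hp _ => (Finset.mem_filter.1 hp).2.one_lt.le

lemma centralBinom_le_mul_pow_card_primes {n : ℕ} (hn : 2 < n) :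
    centralBinom n ≤ (2 * n) ^ sqrt (2 * n) * 4 ^ (2 * n / 3) *
      (2 * n) ^ ((Finset.Ioc n (2 * n)).filter Nat.Prime).card := by
  set f : ℕ → ℕ := fun p => p ^ (centralBinom n).factorization p
  set P := (Finset.Ioc n (2 * n)).filter Nat.Prime
  have hsub : Finset.range (2 * n / 3 + 1) ∪ P ⊆ Finset.range (2 * n + 1) := by
    intro p hp
    simp only [P, Finset.mem_union, Finset.mem_range, Finset.mem_filter, Finset.mem_Ioc] at hp ⊢
    omega
  have hrest : ∀ p ∈ Finset.range (2 * n + 1), p ∉ Finset.range (2 * n / 3 + 1) ∪ P →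
      f p = 1 := fun p hp hp' => by
    simp only [P, Finset.mem_union, Finset.mem_range, Finset.mem_filter, Finset.mem_Ioc,
      not_or, not_and] at hp hp'
    by_cases hpr : p.Prime
    · have hpn : p ≤ n := by
        by_contra h
        exact hp'.2 ⟨by omega, by omega⟩ hpr
      simp [f, factorization_centralBinom_of_two_mul_self_lt_three_mul hn hpn (by omega)]
    · simp [f, factorization_eq_zero_of_not_prime _ hpr]
  have hdisj : Disjoint (Finset.range (2 * n / 3 + 1)) P := by
    refine Finset.disjoint_left.2 fun p hp hp' => ?_
    simp only [P, Finset.mem_range, Finset.mem_filter, Finset.mem_Ioc] at hp hp'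
    omega
  rw [← prod_pow_factorization_centralBinom, ← Finset.prod_subset hsub hrest,
    Finset.prod_union hdisj]
  exact mul_le_mul' (prod_pow_factorization_centralBinom_le (by omega))
    (Finset.prod_le_pow_card _ _ _ fun p _ => pow_factorization_choose_le (by omega))

lemma seventy_two_mul_succ_sq_le_two_pow {m : ℕ} (hm : 14 ≤ m) : 72 * (m + 1) ^ 2 ≤ 2 ^ m := by
  induction m, hm using Nat.le_induction with
  | base => norm_num
  | succ m hm ih =>
    calc 72 * (m + 1 + 1) ^ 2 ≤ 2 * (72 * (m + 1) ^ 2) := by nlinarith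
      _ ≤ 2 * 2 ^ m := by omega
      _ = 2 ^ (m + 1) := by ring

end Nat

lemma mem_primesIn {m p : ℕ} : p ∈ primesIn m ↔ (2 ^ m < p ∧ p ≤ 2 ^ (m + 1)) ∧ p.Prime := by
  rw [primesIn, Finset.mem_filter, Finset.mem_Ioc]

lemma primesIn_nonempty (m : ℕ) : (primesIn m).Nonempty := by
  obtain ⟨p, hp, hp1, hp2⟩ := Nat.exists_prime_lt_and_le_two_mul (2 ^ m) (by positivity)
  exact ⟨p, mem_primesIn.2 ⟨⟨hp1, hp2.trans_eq (pow_succ' 2 m).symm⟩, hp⟩⟩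

lemma two_pow_lt_mul_card_primesIn {m : ℕ} (hm : 14 ≤ m) :
    2 ^ m < 3 * ((m + 1) * (primesIn m).card) := by
  set N := (primesIn m).card
  set n := 2 ^ m
  have hn : 2 ^ 4 ≤ n := Nat.pow_le_pow_right (by norm_num) (by omega)
  have h2n : 2 * n = 2 ^ (m + 1) := (pow_succ' 2 m).symm
  have hbound := Nat.centralBinom_le_mul_pow_card_primes (n := n) (by omega)
  rw [show (Finset.Ioc n (2 * n)).filter Nat.Prime = primesIn m by rw [h2n]; rfl] at hbound
  set s := Nat.sqrt (2 * n)
  set q := 2 * n / 3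
  have hexp : 2 ^ (2 * n) < 2 ^ (m + ((m + 1) * s + 2 * q + (m + 1) * N)) := by
    have h := (Nat.four_pow_lt_mul_centralBinom n (by omega)).trans_le
      (Nat.mul_le_mul_left n hbound)
    rw [h2n, show (4 : ℕ) = 2 ^ 2 by norm_num, ← pow_mul, ← pow_mul, ← pow_mul, ← pow_mul,
      ← pow_add, ← pow_add, ← pow_add] at h
    exact h
  have hlin := (Nat.pow_lt_pow_iff_right (by norm_num)).1 hexp
  have hpoly : 72 * (m + 1) ^ 2 ≤ n := Nat.seventy_two_mul_succ_sq_le_two_pow hm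
  have hs : 6 * ((m + 1) * s) ≤ n := by
    refine Nat.mul_self_le_mul_self_iff.1 ?_
    calc 6 * ((m + 1) * s) * (6 * ((m + 1) * s)) = 36 * (m + 1) ^ 2 * (s * s) := by ring
      _ ≤ 36 * (m + 1) ^ 2 * (2 * n) := Nat.mul_le_mul_left _ (Nat.sqrt_le _)
      _ = 72 * (m + 1) ^ 2 * n := by ring
      _ ≤ n * n := by gcongr
  have hm6 : 6 * m ≤ n := by nlinarith
  omega

lemma two_pow_le_mul_card_primesIn {m : ℕ} (hm : 1 ≤ m) :
    2 ^ m ≤ 2 ^ 14 * m * (primesIn m).card := by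
  have hN := (primesIn_nonempty m).card_pos
  rcases lt_or_ge m 14 with hm14 | hm14
  · calc 2 ^ m ≤ 2 ^ 14 := Nat.pow_le_pow_right (by norm_num) hm14.le
      _ ≤ 2 ^ 14 * m * (primesIn m).card := by nlinarith
  · calc 2 ^ m ≤ 3 * ((m + 1) * (primesIn m).card) := (two_pow_lt_mul_card_primesIn hm14).le
      _ ≤ 2 ^ 14 * m * (primesIn m).card := by nlinarith

lemma two_mul_exp_le_three_mul_exp {m : ℕ} (hm : 1 ≤ m) (ε : ℝ) :
    2 * Real.exp (-ε ^ 2 * (primesIn m).card / (2 * 3 ^ 2)) ≤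
      3 * Real.exp (-(18 * 2 ^ 14)⁻¹ * ε ^ 2 * 2 ^ m / m) := by
  have hcard : (2 : ℝ) ^ m ≤ 2 ^ 14 * m * (primesIn m).card := by
    exact_mod_cast two_pow_le_mul_card_primesIn hm
  have hm0 : (0 : ℝ) < m := by exact_mod_cast hm
  have hexp : -ε ^ 2 * (primesIn m).card / (2 * 3 ^ 2) ≤
      -(18 * 2 ^ 14)⁻¹ * ε ^ 2 * 2 ^ m / m := by
    rw [div_le_div_iff₀ (by norm_num) hm0]
    nlinarith [sq_nonneg ε]
  nlinarith [Real.exp_le_exp.2 hexp, Real.exp_pos (-(18 * 2 ^ 14)⁻¹ * ε ^ 2 * 2 ^ m / m)]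

section Probability

open ProbabilityTheory
open scoped ENNReal NNReal

variable {Ω : Type*} [MeasurableSpace Ω] {μ : Measure Ω}

lemma integral_comp_eq_average_of_uniform [IsFiniteMeasure μ] {X : Ω → ℕ} (hX : Measurable X)
    {p : ℕ} (hlt : ∀ ω, X ω < p) (hunif : ∀ t < p, μ (X ⁻¹' {t}) = (p : ℝ≥0∞)⁻¹) (f : ℕ → ℝ) :
    ∫ ω, f (X ω) ∂μ = (p : ℝ)⁻¹ * ∑ t ∈ Finset.range p, f t := by
  have hdecomp : (fun ω => f (X ω)) =
      fun ω => ∑ t ∈ Finset.range p, (X ⁻¹' {t}).indicator (fun _ => f t) ω := by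
    ext ω
    rw [Finset.sum_eq_single_of_mem (X ω) (Finset.mem_range.2 (hlt ω))]
    · simp
    · intro t _ ht
      exact Set.indicator_of_notMem (Ne.symm ht) _
  have hmeas : ∀ t, MeasurableSet (X ⁻¹' {t}) := fun t => hX (measurableSet_singleton t)
  rw [hdecomp, integral_finsetSum _ fun t _ => (integrable_const _).indicator (hmeas t),
    Finset.mul_sum]
  refine Finset.sum_congr rfl fun t ht => ?_
  rw [integral_indicator_const _ (hmeas t), measureReal_def, hunif t (Finset.mem_range.1 ht)]
  simp

lemma iIndepFun_subtype_of_measure_biInter_preimage [IsProbabilityMeasure μ] {ι β : Type*}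
    [MeasurableSpace β] {s : Finset ι} {X : ι → Ω → β}
    (h : ∀ E : ι → Set β, μ (⋂ i ∈ (s : Set ι), X i ⁻¹' E i) = ∏ i ∈ s, μ (X i ⁻¹' E i)) :
    iIndepFun (fun i : s => X i) μ := by
  classical
  rw [iIndepFun_iff_measure_inter_preimage_eq_mul]
  intro T sets _
  let E : ι → Set β := fun i =>
    if hi : i ∈ s then (if ⟨i, hi⟩ ∈ T then sets ⟨i, hi⟩ else Set.univ) else Set.univ
  convert h E using 1
  · congr 1
    ext ω
    simp only [Set.mem_iInter, Set.mem_preimage, Finset.mem_coe, E]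
    refine ⟨fun hω i hi => ?_, fun hω i hT => ?_⟩
    · rw [dif_pos hi]
      split_ifs with hT
      exacts [hω ⟨i, hi⟩ hT, Set.mem_univ _]
    · simpa [hT] using hω i i.2
  · rw [← Finset.prod_coe_sort s, ← Fintype.prod_ite_mem T]
    refine Finset.prod_congr rfl fun i _ => ?_
    by_cases hi : i ∈ T <;> simp [E, hi]

lemma ProbabilityTheory.HasSubgaussianMGF.measureReal_abs_ge_le [IsFiniteMeasure μ]
    {X : Ω → ℝ} {c : ℝ≥0} (h : HasSubgaussianMGF X c μ) {ε : ℝ} (hε : 0 ≤ ε) :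
    μ.real {ω | ε ≤ |X ω|} ≤ 2 * Real.exp (-ε ^ 2 / (2 * c)) := by
  calc μ.real {ω | ε ≤ |X ω|} ≤ μ.real ({ω | ε ≤ X ω} ∪ {ω | ε ≤ (-X) ω}) :=
        measureReal_mono fun ω (hω : ε ≤ |X ω|) => (le_abs.1 hω : ε ≤ X ω ∨ ε ≤ -X ω)
    _ ≤ μ.real {ω | ε ≤ X ω} + μ.real {ω | ε ≤ (-X) ω} := measureReal_union_le _ _
    _ ≤ _ := by linarith [h.measure_ge_le hε, h.neg.measure_ge_le hε]

lemma measureReal_abs_average_ge_le [IsProbabilityMeasure μ] {ι : Type*} {s : Finset ι}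
    (hs : s.Nonempty) {X : ι → Ω → ℝ} (hind : iIndepFun (fun i : s => X i) μ)
    (hmeas : ∀ i ∈ s, AEMeasurable (X i) μ) {B : ℝ} (hB : ∀ i ∈ s, ∀ᵐ ω ∂μ, |X i ω| ≤ B)
    (hmean : ∀ i ∈ s, μ[X i] = 0) {ε : ℝ} (hε : 0 ≤ ε) :
    μ.real {ω | ε ≤ |(s.card : ℝ)⁻¹ * ∑ i ∈ s, X i ω|} ≤
      2 * Real.exp (-ε ^ 2 * s.card / (2 * B ^ 2)) := by
  have hN : (0 : ℝ) < s.card := by exact_mod_cast hs.card_pos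
  have hsub : ∀ i : s, HasSubgaussianMGF (X i) ((‖B - -B‖₊ / 2) ^ 2) μ := fun i =>
    hasSubgaussianMGF_of_mem_Icc_of_integral_eq_zero (hmeas i i.2)
      (by filter_upwards [hB i i.2] with ω h using abs_le.1 h) (hmean i i.2)
  have htail := (HasSubgaussianMGF.sum_of_iIndepFun hind (s := Finset.univ)
    fun i _ => hsub i).measureReal_abs_ge_le (mul_nonneg hN.le hε)
  have hset : {ω | ε ≤ |(s.card : ℝ)⁻¹ * ∑ i ∈ s, X i ω|} =
      {ω | s.card * ε ≤ |∑ i : s, X i ω|} := by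
    ext ω
    rw [Set.mem_ofPred_eq, Set.mem_ofPred_eq, Finset.sum_coe_sort s (X · ω), abs_mul, abs_inv,
      Nat.abs_cast, le_inv_mul_iff₀ hN]
  have hparam : ((∑ _i : s, (‖B - -B‖₊ / 2) ^ 2 : ℝ≥0) : ℝ) = s.card * B ^ 2 := by
    simp [← two_mul, sq_abs]
  rw [hset]
  refine htail.trans_eq ?_
  rw [hparam, show -(s.card * ε) ^ 2 / (2 * (s.card * B ^ 2)) =
    s.card * (-ε ^ 2 * s.card) / (s.card * (2 * B ^ 2)) by ring, mul_div_mul_left _ _ hN.ne']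

end Probability

/-- **Concentration for the divisibility averages.** There are absolute constants
`c, C > 0` such that: for natural numbers `k, m, a, a₁,…,a_k, b₁,…,b_k`, signs
`c_p ∈ {-1,0,1}`, a family of signs `b_{i,r} ∈ {-1,1}`, and jointly independent random
variables `(n_p)_{2^m < p ≤ 2^(m+1), p prime}` with `n_p` uniform on `ℤ/pℤ`, the random
variables `W_p` are jointly independent, bounded in magnitude by an absolute constant,
have mean zero, and satisfy
`P(|E_{2^m < p ≤ 2^(m+1)} W_p| ≥ ε) ≤ C exp(-c ε² 2^m / m)` for all `0 < ε ≤ 1`. -/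
theorem concentration_divisibility_averages :
    ∃ c C : ℝ, 0 < c ∧ 0 < C ∧
      ∀ (k m A : ℕ), 1 ≤ k → 1 ≤ m → 1 ≤ A →
      ∀ (a b : Fin k → ℕ), (∀ i, 1 ≤ a i) → (∀ i, 1 ≤ b i) →
      ∀ cp : ℕ → ℝ, (∀ p, cp p = -1 ∨ cp p = 0 ∨ cp p = 1) →
      ∀ bs : Fin k → ℕ → ℝ, (∀ i r, bs i r = -1 ∨ bs i r = 1) →
      ∀ (Ω : Type) (_ : MeasurableSpace Ω) (μ : Measure Ω),
        IsProbabilityMeasure μ →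
      ∀ np : ℕ → Ω → ℕ,
        (∀ p, Measurable (np p)) →
        -- each `n_p` takes values in `ℤ/pℤ` and is uniformly distributed there
        (∀ p ∈ primesIn m, ∀ ω, np p ω < p) →
        (∀ p ∈ primesIn m, ∀ t : ℕ, t < p → μ (np p ⁻¹' {t}) = ((p : ENNReal))⁻¹) →
        -- the `n_p` are jointly independent
        (∀ E : ℕ → Set ℕ,
          μ (⋂ p ∈ (primesIn m : Set ℕ), np p ⁻¹' E p) =
            ∏ p ∈ primesIn m, μ (np p ⁻¹' E p)) →
        -- the `W_p` are jointly independent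
        ((∀ E : ℕ → Set ℝ,
          μ (⋂ p ∈ (primesIn m : Set ℕ),
              (fun ω => Wp k a b A m cp bs p (np p ω)) ⁻¹' E p) =
            ∏ p ∈ primesIn m,
              μ ((fun ω => Wp k a b A m cp bs p (np p ω)) ⁻¹' E p)) ∧
        -- the `W_p` are bounded in magnitude by an absolute constant
        (∀ p ∈ primesIn m, ∀ ω, |Wp k a b A m cp bs p (np p ω)| ≤ C) ∧
        -- the `W_p` have mean zero
        (∀ p ∈ primesIn m, ∫ ω, Wp k a b A m cp bs p (np p ω) ∂μ = 0) ∧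
        -- concentration of the average of the `W_p`
        (∀ ε : ℝ, 0 < ε → ε ≤ 1 →
          μ {ω | ε ≤ |((primesIn m).card : ℝ)⁻¹ *
              ∑ p ∈ primesIn m, Wp k a b A m cp bs p (np p ω)|} ≤
            ENNReal.ofReal (C * Real.exp (-c * ε ^ 2 * 2 ^ m / m)))) := by
  refine ⟨(18 * 2 ^ 14)⁻¹, 3, by positivity, by norm_num, ?_⟩
  intro k m A _ hm _ a b _ _ cp hcp bs hbs Ω _ μ _ np hnp hlt hunif hindep
  set W : ℕ → ℕ → ℝ := Wp k a b A m cp bs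
  have hW : ∀ p ∈ primesIn m, ∀ v, |W p v| ≤ 3 := fun p hp =>
    abs_Wp_le_three (mem_primesIn.1 hp).1.1 (mem_primesIn.1 hp).1.2
      (by rcases hcp p with h | h | h <;> simp [h])
      fun i r => by rcases hbs i r with h | h <;> simp [h]
  have hmean : ∀ p ∈ primesIn m, ∫ ω, W p (np p ω) ∂μ = 0 := fun p hp => by
    rw [integral_comp_eq_average_of_uniform (hnp p) (hlt p hp) (hunif p hp),
      sum_range_Wp_eq_zero (mem_primesIn.1 hp).2.pos, mul_zero]
  refine ⟨fun E => ?_, fun p hp ω => hW p hp _, hmean, fun ε hε _ => ?_⟩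
  · simpa only [Set.preimage_preimage] using hindep fun p => W p ⁻¹' E p
  have hind : ProbabilityTheory.iIndepFun (fun p : primesIn m => fun ω => W p (np p ω)) μ :=
    (iIndepFun_subtype_of_measure_biInter_preimage hindep).comp (fun p => W p)
      fun _ => measurable_of_countable _
  have hconc := measureReal_abs_average_ge_le (X := fun p ω => W p (np p ω))
    (primesIn_nonempty m) hind
    (fun p _ => ((measurable_of_countable (W p)).comp (hnp p)).aemeasurable)
    (fun p hp => ae_of_all _ fun ω => hW p hp _) hmean hε.le
  rw [ENNReal.le_ofReal_iff_toReal_le (measure_ne_top _ _) (by positivity), ← measureReal_def]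
  exact hconc.trans (two_mul_exp_le_three_mul_exp hm ε)
end
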